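/- For the mass-spring-damper system with state matrix A = [[0,1,0,0],[−2k/M, −2d/M, k/M, d/M],[0,0,0,1],[k/m, d/m, −2k/m, −2d/m]] with M, m, k, d > 0, all eigenvalues of A have strictly negative real part. -/

import Mathlib

/-!
An eigenvector of `A` has the form `(u, λu, w, λw)`, where `(u, w) ≠ 0` solves the second-order
system `λ² 𝕄 x + (λ d + k) L x = 0` with `𝕄 = diag(M, m)` and `L = [[2, -1], [-1, 2]]`.
Pairing it with `(ū, w̄)` gives the real quadratic `a λ² + d e λ + k e = 0`, where
`a = M |u|² + m |w|²` and `e = |u|² + |w - u|² + |w|²` are the mass and spring quadratic forms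
at `(u, w)`. Both are positive, and a quadratic with positive real coefficients has only
roots in the open left half-plane.
-/

open Matrix Complex ComplexConjugate

theorem Matrix.exists_mulVec_eq_smul_of_mem_spectrum {K n : Type*} [Field K] [Fintype n]
    [DecidableEq n] {A : Matrix n n K} {μ : K} (h : μ ∈ spectrum K A) :
    ∃ v ≠ 0, A *ᵥ v = μ • v := by
  rw [← spectrum_toLin', ← Module.End.hasEigenvalue_iff_mem_spectrum] at h
  obtain ⟨v, hv⟩ := h.exists_hasEigenvector
  exact ⟨v, hv.2, by simpa using hv.apply_eq_smul⟩

theorem Complex.re_neg_of_quadratic_eq_zero {a b c : ℝ} (ha : 0 < a) (hb : 0 < b) (hc : 0 < c)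
    {z : ℂ} (h : a * z ^ 2 + b * z + c = 0) : z.re < 0 := by
  have hre : a * (z.re ^ 2 - z.im ^ 2) + b * z.re + c = 0 := by
    simpa [sq] using congrArg Complex.re h
  have him : z.im * (2 * a * z.re + b) = 0 := by
    linear_combination (by simpa [sq] using congrArg Complex.im h : _ = _)
  rcases mul_eq_zero.mp him with him | hvertex
  · rw [him] at hre
    by_contra! hz
    nlinarith [mul_nonneg (mul_nonneg ha.le hz) hz]
  · nlinarith

noncomputable def springEnergy (u w : ℂ) : ℝ := normSq u + normSq (w - u) + normSq w

theorem springEnergy_pos {u w : ℂ} (h : u ≠ 0 ∨ w ≠ 0) : 0 < springEnergy u w := by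
  unfold springEnergy
  have := normSq_nonneg (w - u)
  rcases h with h | h
  · linarith [normSq_pos.mpr h, normSq_nonneg w]
  · linarith [normSq_pos.mpr h, normSq_nonneg u]

theorem conj_mul_add_conj_mul_eq_springEnergy (u w : ℂ) :
    conj u * (2 * u - w) + conj w * (2 * w - u) = springEnergy u w := by
  simp only [springEnergy, ofReal_add, ← mul_conj, map_sub]
  ring

theorem re_neg_of_spring_damper_eigen {M m k d : ℝ} (hM : 0 < M) (hm : 0 < m) (hk : 0 < k)
    (hd : 0 < d) {u w lam : ℂ} (huw : u ≠ 0 ∨ w ≠ 0)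
    (hu : M * lam ^ 2 * u + (d * lam + k) * (2 * u - w) = 0)
    (hw : m * lam ^ 2 * w + (d * lam + k) * (2 * w - u) = 0) : lam.re < 0 := by
  have hkin : 0 < M * normSq u + m * normSq w := by
    rcases huw with h | h
    · nlinarith [normSq_pos.mpr h, normSq_nonneg w]
    · nlinarith [normSq_pos.mpr h, normSq_nonneg u]
  have hpot := springEnergy_pos huw
  refine re_neg_of_quadratic_eq_zero hkin (mul_pos hd hpot) (mul_pos hk hpot) ?_
  push_cast
  linear_combination conj u * hu + conj w * hw - lam ^ 2 * (M * mul_conj u + m * mul_conj w)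
    - (d * lam + k) * conj_mul_add_conj_mul_eq_springEnergy u w

noncomputable def massSpringDamperMatrix (M m k d : ℝ) : Matrix (Fin 4) (Fin 4) ℝ :=
  !![0, 1, 0, 0;
     -2*k/M, -2*d/M, k/M, d/M;
     0, 0, 0, 1;
     k/m, d/m, -2*k/m, -2*d/m]

theorem massSpringDamperMatrix_eigenvector {M m k d : ℝ} (hM : M ≠ 0) (hm : m ≠ 0)
    {v : Fin 4 → ℂ} {lam : ℂ}
    (hv : (massSpringDamperMatrix M m k d).map (algebraMap ℝ ℂ) *ᵥ v = lam • v) :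
    v 1 = lam * v 0 ∧ v 3 = lam * v 2 ∧
      M * lam ^ 2 * v 0 + (d * lam + k) * (2 * v 0 - v 2) = 0 ∧
      m * lam ^ 2 * v 2 + (d * lam + k) * (2 * v 2 - v 0) = 0 := by
  have r0 := congrFun hv 0
  have r1 := congrFun hv 1
  have r2 := congrFun hv 2
  have r3 := congrFun hv 3
  simp only [mulVec, dotProduct, massSpringDamperMatrix, neg_mul, coe_algebraMap, Fin.isValue,
    map_apply, of_apply, cons_val', cons_val_fin_one, cons_val_zero, Fin.sum_univ_four, ofReal_zero,
    zero_mul, cons_val_one, ofReal_one, one_mul, zero_add, cons_val, add_zero, Pi.smul_apply,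
    smul_eq_mul, ofReal_div, ofReal_neg, ofReal_mul, ofReal_ofNat] at r0 r1 r2 r3
  have hM' : (M : ℂ) ≠ 0 := ofReal_ne_zero.mpr hM
  have hm' : (m : ℂ) ≠ 0 := ofReal_ne_zero.mpr hm
  refine ⟨r0, r2, ?_, ?_⟩
  · rw [r0, r2] at r1
    field_simp at r1
    linear_combination -r1
  · rw [r0, r2] at r3
    field_simp at r3
    linear_combination -r3

/-- The mass-spring-damper state matrix (two masses `M, m`, spring constant `k`,
damping `d`, all positive) has all eigenvalues with strictly negative real part. -/
theorem mass_spring_damper_stable (M m k d : ℝ)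
    (hM : 0 < M) (hm : 0 < m) (hk : 0 < k) (hd : 0 < d) :
    let A : Matrix (Fin 4) (Fin 4) ℝ :=
      !![0, 1, 0, 0;
         -2*k/M, -2*d/M, k/M, d/M;
         0, 0, 0, 1;
         k/m, d/m, -2*k/m, -2*d/m]
    ∀ lam ∈ spectrum ℂ (A.map (algebraMap ℝ ℂ)), lam.re < 0 := by
  intro A lam hlam
  obtain ⟨v, hv0, hv⟩ := exists_mulVec_eq_smul_of_mem_spectrum hlam
  obtain ⟨h1, h3, hu, hw⟩ := massSpringDamperMatrix_eigenvector hM.ne' hm.ne' hv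
  have huw : v 0 ≠ 0 ∨ v 2 ≠ 0 := by
    by_contra! h
    refine hv0 (funext fun i => ?_)
    fin_cases i <;> simp [h1, h3, h]
  exact re_neg_of_spring_damper_eigen hM hm hk hd huw hu hw
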